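/- The negative log of the Cauchy CDF is not convex: for ψ(z) = 1/2 + (1/π) arctan(z), the function f(z) = -log ψ(z) satisfies f''(z) < 0 for all z < -√3. In particular, f is not convex on ℝ. -/

import Mathlib

/-!
Writing `ψ` for the Cauchy CDF, `π ψ' = (1 + z²)⁻¹` gives `(-log ψ)' = -(π (1 + z²) ψ)⁻¹` and
`(-log ψ)'' = (1 + 2 z π ψ) / (π (1 + z²) ψ)²`. For `z < 0` the reflection `π ψ(z) = arctan (-z)⁻¹`
turns the numerator into `1 - 2 t arctan t⁻¹` with `t = -z`, which is negative once
`arctan t⁻¹ > t⁻¹ / 2`, in particular for `t ≥ 1`. A differentiable convex function has a monotone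
derivative, hence a nonnegative second derivative, so `-log ψ` is not convex.
-/

open Real

lemma half_lt_arctan {x : ℝ} (hx₀ : 0 < x) (hx₁ : x ≤ 1) : x / 2 < arctan x := by
  have hslope : ∀ y ∈ interior (Set.Icc (0 : ℝ) 1), 1 / 2 < deriv arctan y := by
    intro y hy
    rw [interior_Icc] at hy
    rw [Real.deriv_arctan, one_div_lt_one_div (by norm_num) (by positivity)]
    nlinarith [hy.1, hy.2]
  have hmvt := (convex_Icc (0 : ℝ) 1).mul_sub_lt_image_sub_of_lt_deriv continuous_arctan.continuousOn
    differentiable_arctan.differentiableOn hslope 0 (by simp) x ⟨hx₀.le, hx₁⟩ hx₀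
  simpa [div_eq_inv_mul] using hmvt

noncomputable def cauchyCDF (z : ℝ) : ℝ := 1 / 2 + (1 / π) * arctan z

lemma cauchyCDF_pos (z : ℝ) : 0 < cauchyCDF z := by
  have := neg_pi_div_two_lt_arctan z
  rw [cauchyCDF, one_div_mul_eq_div, ← sub_lt_iff_lt_add', zero_sub, lt_div_iff₀ pi_pos]
  linarith

lemma pi_mul_cauchyCDF_of_neg {z : ℝ} (hz : z < 0) : π * cauchyCDF z = arctan (-z)⁻¹ := by
  rw [arctan_inv_of_pos (neg_pos.mpr hz), arctan_neg, cauchyCDF]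
  field_simp
  ring

lemma hasDerivAt_cauchyCDF (z : ℝ) : HasDerivAt cauchyCDF (π * (1 + z ^ 2))⁻¹ z :=
  (((hasDerivAt_arctan z).const_mul (1 / π)).const_add (1 / 2)).congr_deriv (by field_simp)

lemma hasDerivAt_neg_log_cauchyCDF (z : ℝ) :
    HasDerivAt (fun z => -log (cauchyCDF z)) (-(π * (1 + z ^ 2) * cauchyCDF z)⁻¹) z :=
  ((hasDerivAt_cauchyCDF z).log (cauchyCDF_pos z).ne').neg.congr_deriv (by field_simp)

lemma deriv_neg_log_cauchyCDF :
    deriv (fun z => -log (cauchyCDF z)) = fun z => -(π * (1 + z ^ 2) * cauchyCDF z)⁻¹ :=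
  funext fun z => (hasDerivAt_neg_log_cauchyCDF z).deriv

lemma hasDerivAt_deriv_neg_log_cauchyCDF (z : ℝ) :
    HasDerivAt (deriv fun z => -log (cauchyCDF z))
      ((1 + 2 * z * (π * cauchyCDF z)) / (π * (1 + z ^ 2) * cauchyCDF z) ^ 2) z := by
  have hden : HasDerivAt (fun z => π * (1 + z ^ 2) * cauchyCDF z)
      (1 + 2 * z * (π * cauchyCDF z)) z :=
    ((((hasDerivAt_pow 2 z).const_add 1).const_mul π).mul (hasDerivAt_cauchyCDF z)).congr_deriv
      (by field_simp; ring)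
  rw [deriv_neg_log_cauchyCDF]
  exact (hden.inv (by positivity [cauchyCDF_pos z])).neg.congr_deriv (by ring)

lemma deriv_deriv_neg_log_cauchyCDF_neg {z : ℝ} (hz : z ≤ -1) :
    deriv (deriv fun z => -log (cauchyCDF z)) z < 0 := by
  rw [(hasDerivAt_deriv_neg_log_cauchyCDF z).deriv, pi_mul_cauchyCDF_of_neg (by linarith)]
  refine div_neg_of_neg_of_pos ?_ (by positivity [cauchyCDF_pos z])
  have hz₀ : 0 < -z := by linarith
  have harctan := half_lt_arctan (inv_pos.mpr hz₀) (inv_le_one_of_one_le₀ (by linarith))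
  have hscaled := mul_lt_mul_of_pos_left harctan hz₀
  rw [mul_div_assoc', mul_inv_cancel₀ hz₀.ne'] at hscaled
  linarith

lemma ConvexOn.deriv_deriv_nonneg {f : ℝ → ℝ} (hf : ConvexOn ℝ Set.univ f)
    (hd : Differentiable ℝ f) (x : ℝ) : 0 ≤ deriv (deriv f) x :=
  (monotoneOn_univ.mp (hf.monotoneOn_deriv fun y _ => hd y)).deriv_nonneg

lemma not_convexOn_neg_log_cauchyCDF : ¬ ConvexOn ℝ Set.univ fun z => -log (cauchyCDF z) :=
  fun hconv => (deriv_deriv_neg_log_cauchyCDF_neg le_rfl).not_ge <|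
    hconv.deriv_deriv_nonneg (fun z => (hasDerivAt_neg_log_cauchyCDF z).differentiableAt) (-1)

/-- The negative log of the standard Cauchy CDF `ψ(z) = 1/2 + (1/π) arctan z` has
negative second derivative for all `z < -√3`; in particular `-log ψ` is not convex on `ℝ`. -/
theorem neg_log_cauchy_cdf_not_convex
    (ψ : ℝ → ℝ) (hψ : ∀ z, ψ z = 1 / 2 + (1 / π) * Real.arctan z)
    (f : ℝ → ℝ) (hf : ∀ z, f z = -Real.log (ψ z)) :
    (∀ z : ℝ, z < -Real.sqrt 3 → deriv (deriv f) z < 0) ∧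
    ¬ ConvexOn ℝ Set.univ f := by
  obtain rfl : f = fun z => -log (cauchyCDF z) := funext fun z => by rw [hf, hψ, cauchyCDF]
  have hsqrt : 1 ≤ √3 := one_le_sqrt.mpr (by norm_num)
  exact ⟨fun z hz => deriv_deriv_neg_log_cauchyCDF_neg (by linarith),
    not_convexOn_neg_log_cauchyCDF⟩
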